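/- (Lattice support condition for the exponential sums.) For every q ∈ ℕ and every c ∈ ℤ^{n+1}: if S_{q,L,λ}(c) ≠ 0, then there exists b ∈ ℤ such that c ≡ b·∇F(λ) (mod L), i.e. c lies in the lattice Γ_{λ,L} := { d ∈ ℤ^{n+1} : ∃ b ∈ ℤ, d ≡ b·∇F(λ) mod L }. -/

import Mathlib

open scoped BigOperators
open Finset Filter Topology Matrix

noncomputable section

namespace Quad

/-- The integral quadratic form `x ↦ xᵀ M_F x` where `N = 2·M_F` is an integer
symmetric matrix with even diagonal, so that the value `(xᵀ N x)/2` is an integer. -/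
def Fint {m : ℕ} (N : Matrix (Fin m) (Fin m) ℤ) (x : Fin m → ℤ) : ℤ :=
  (∑ i, ∑ j, N i j * x i * x j) / 2

/-- The corresponding real quadratic form `x ↦ xᵀ M_F x`, `N = 2·M_F`. -/
def FR {m : ℕ} (N : Matrix (Fin m) (Fin m) ℤ) (x : Fin m → ℝ) : ℝ :=
  (∑ i, ∑ j, (N i j : ℝ) * x i * x j) / 2

/-- The real quadratic form attached to a real matrix. -/
def QFR {m : ℕ} (A : Matrix (Fin m) (Fin m) ℝ) (x : Fin m → ℝ) : ℝ :=
  ∑ i, ∑ j, A i j * x i * x j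

/-- The gradient `∇F(x) = 2 M_F x = N x`. -/
def grad {m : ℕ} (N : Matrix (Fin m) (Fin m) ℤ) (x : Fin m → ℤ) : Fin m → ℤ :=
  fun i => ∑ j, N i j * x j

/-- `H_{λ,L}(y) = F(λ)/L + ∇F(λ)·y` (assuming `L ∣ F(λ)`). -/
def Hpoly {m : ℕ} (N : Matrix (Fin m) (Fin m) ℤ) (L : ℕ) (lam y : Fin m → ℤ) : ℤ :=
  Fint N lam / (L : ℤ) + ∑ i, grad N lam i * y i

/-- The additive character `e_q(t) = exp(2πit/q)`. -/
def eChar (q : ℕ) (t : ℝ) : ℂ := Complex.exp (2 * Real.pi * Complex.I * (t : ℂ) / (q : ℂ))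

/-- The dual form value `N_F(c) = cᵀ · adj(N) · c`, `N = 2 M_F`; this equals `2ⁿ F*(c)`. -/
def dualF {m : ℕ} (N : Matrix (Fin m) (Fin m) ℤ) (c : Fin m → ℤ) : ℤ :=
  ∑ i, ∑ j, N.adjugate i j * c i * c j

/-- The embedding sending the `i`-th of the `n-1` variables of `F₂` to coordinate `i+2`. -/
def emb {n : ℕ} (i : Fin (n-1)) : Fin (n+1) := ⟨i.val + 2, by have h := i.isLt; omega⟩

/-- The quadratic Gauss sum `ι_q = Σ_{x mod q} e_q(x²)`. -/
def iotaSum (q : ℕ) : ℂ := ∑ x ∈ Finset.range q, eChar q ((x : ℝ)^2)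

open Classical in
/-- The exponential sum `S_{q,L,λ}(c)`. -/
def Sq (n : ℕ) (N : Matrix (Fin (n+1)) (Fin (n+1)) ℤ) (q L : ℕ)
    (lam c : Fin (n+1) → ℤ) : ℂ :=
  ∑ a ∈ (Finset.range q).filter (fun a => Nat.gcd a q = 1),
    ∑ σ ∈ (Finset.univ : Finset (Fin (n+1) → Fin (q*L))).filter
        (fun σ => (L : ℤ) ∣ Hpoly N L lam (fun i => ((σ i : ℕ) : ℤ))),
      eChar (q*L)
        (((a : ℤ) * (Hpoly N L lam (fun i => ((σ i : ℕ) : ℤ))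
            + (L : ℤ) * Fint N (fun i => ((σ i : ℕ) : ℤ)))
          + ∑ i, c i * ((σ i : ℕ) : ℤ) : ℤ) : ℝ)

/-- The good-modulus factor `S⁽¹⁾_{q,L,λ}(c)` (for `q = q₁q₂`, `gcd(q₁,2LD) = 1`). -/
def S1 (n : ℕ) (N : Matrix (Fin (n+1)) (Fin (n+1)) ℤ) (q₁ q₂ L : ℕ) (k₁ : ℤ)
    (lam c : Fin (n+1) → ℤ) : ℂ :=
  ∑ σ : Fin (n+1) → Fin q₁,
    ∑ a ∈ (Finset.range q₁).filter (fun a => Nat.gcd a q₁ = 1),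
      eChar q₁
        (((a : ℤ) * (((q₂ : ℤ) * (L : ℤ))^2 * Fint N (fun i => ((σ i : ℕ) : ℤ))
              + (q₂ : ℤ) * ((∑ i, grad N lam i * ((σ i : ℕ) : ℤ)) + k₁))
          + ∑ i, c i * ((σ i : ℕ) : ℤ) : ℤ) : ℝ)

open Classical in
/-- The bad-modulus factor `S⁽²⁾_{q,L,λ}(c)`. -/
def S2 (n : ℕ) (N : Matrix (Fin (n+1)) (Fin (n+1)) ℤ) (q₁ q₂ L : ℕ) (k₂ : ℤ)
    (lam c : Fin (n+1) → ℤ) : ℂ :=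
  ∑ σ ∈ (Finset.univ : Finset (Fin (n+1) → Fin (q₂*L))).filter
      (fun σ => (L : ℤ) ∣ Hpoly N L lam (fun i => (q₁ : ℤ) * ((σ i : ℕ) : ℤ))),
    ∑ a ∈ (Finset.range q₂).filter (fun a => Nat.gcd a q₂ = 1),
      eChar (q₂*L)
        (((a : ℤ) * ((q₁ : ℤ)^2 * (L : ℤ) * Fint N (fun i => ((σ i : ℕ) : ℤ))
              + (q₁ : ℤ) * ((∑ i, grad N lam i * ((σ i : ℕ) : ℤ)) + k₂))
          + ∑ i, c i * ((σ i : ℕ) : ℤ) : ℤ) : ℝ)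

/-- The complete quadratic exponential sum `T_q(G,m;c)`. -/
def Tq (n : ℕ) (NG : Matrix (Fin (n+1)) (Fin (n+1)) ℤ) (q : ℕ) (m : ℤ)
    (c : Fin (n+1) → ℤ) : ℂ :=
  ∑ a ∈ (Finset.range q).filter (fun a => Nat.gcd a q = 1),
    ∑ b : Fin (n+1) → Fin q,
      eChar q (((a : ℤ) * (Fint NG (fun i => ((b i : ℕ) : ℤ)) - m)
        + ∑ i, c i * ((b i : ℕ) : ℤ) : ℤ) : ℝ)

/-- The counting function whose normalised limit is the local density
`σ_p(W;L,λ)`: the number of `v ∈ (ℤ/p^kℤ)^{n+1}` with `F(v) ≡ 0 mod p^k` and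
`v ≡ λ mod p^{ord_p L}`. -/
def localCount (n : ℕ) (N : Matrix (Fin (n+1)) (Fin (n+1)) ℤ) (L : ℕ)
    (lam : Fin (n+1) → ℤ) (p k : ℕ) : ℕ :=
  Nat.card {v : Fin (n+1) → Fin (p^k) //
    ((p : ℤ)^k ∣ Fint N (fun i => ((v i : ℕ) : ℤ))) ∧
    ∀ i, (p : ℤ)^(padicValNat p L) ∣ ((v i : ℕ) : ℤ) - lam i}

/-- The coordinates `t(x) = Mx` of an integer vector. -/
def tmap (n : ℕ) (M : Matrix (Fin (n+1)) (Fin (n+1)) ℝ) (x : Fin (n+1) → ℤ) :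
    Fin (n+1) → ℝ :=
  M.mulVec (fun i => (x i : ℝ))

/-- The counting function `N_W((R,ξ),(L,Γ);B)` for the affine cone. -/
def NW (n : ℕ) (N : Matrix (Fin (n+1)) (Fin (n+1)) ℤ)
    (M : Matrix (Fin (n+1)) (Fin (n+1)) ℝ) (a b : Fin (n+1) → ℝ)
    (B R : ℝ) (L : ℕ) (Γ : Fin (n+1) → ℤ) : ℕ :=
  Nat.card {x : Fin (n+1) → ℤ //
    x ≠ 0 ∧ Fint N x = 0 ∧ (∀ i, (L : ℤ) ∣ x i - Γ i) ∧
    tmap n M x 0 ≠ 0 ∧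
    (∀ j : Fin (n+1), 2 ≤ j.val →
      a j ≤ R * (tmap n M x j / tmap n M x 0) ∧ R * (tmap n M x j / tmap n M x 0) ≤ b j) ∧
    (∀ i, |tmap n M x i| ≤ B)}

/-- Twice the counting function `N_V((R,ξ),(L,Λ);B)` for the projective quadric:
the number of primitive integer vectors on the cone, in the real zoom region,
of height at most `B`, congruent mod `L` to a unit multiple of `Γ`. -/
def NV (n : ℕ) (N : Matrix (Fin (n+1)) (Fin (n+1)) ℤ)
    (M : Matrix (Fin (n+1)) (Fin (n+1)) ℝ) (a b : Fin (n+1) → ℝ)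
    (B R : ℝ) (L : ℕ) (Γ : Fin (n+1) → ℤ) : ℕ :=
  Nat.card {x : Fin (n+1) → ℤ //
    Finset.univ.gcd x = 1 ∧ Fint N x = 0 ∧
    tmap n M x 0 ≠ 0 ∧
    (∀ j : Fin (n+1), 2 ≤ j.val →
      a j ≤ R * (tmap n M x j / tmap n M x 0) ∧ R * (tmap n M x j / tmap n M x 0) ≤ b j) ∧
    (∀ i, |tmap n M x i| ≤ B) ∧
    (∃ γ : (ZMod L)ˣ, ∀ i, ((x i : ZMod L)) = (γ : ZMod L) * ((Γ i : ZMod L)))}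

/-- The value of the singular integral `I_R` for `R ≥ R₀`. -/
def IRval (n : ℕ) (M : Matrix (Fin (n+1)) (Fin (n+1)) ℝ) (a b : Fin (n+1) → ℝ)
    (R : ℝ) : ℝ :=
  2 * (∏ j ∈ Finset.univ.filter (fun j : Fin (n+1) => 2 ≤ j.val), (b j - a j))
    / (((n : ℝ) - 1) * |M.det| * R^(n-1))

/-- The error exponent factor `E_τ(B)`. -/
def Etau (n : ℕ) (τ B : ℝ) : ℝ :=
  if 5 ≤ n then B ^ (-(((n : ℝ) - 3) * τ / (5 * (n : ℝ) - 7)))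
  else B ^ (-(2 * τ / 17))

/-- The error factor `E_τ(1;B)` from the upper-bound range `-1 < τ < 1`. -/
def Etau1 (n : ℕ) (τ B : ℝ) : ℝ :=
  if 5 ≤ n then B ^ (-(((n : ℝ) - 3) * τ / 2))
  else B ^ (-τ) + B ^ (-((1 + τ)/4))

end Quad

namespace Quad

/-!
If `L ∣ ∇F(λ)·t`, translating `σ` by `q t` preserves the condition `L ∣ H_{λ,L}(σ)` and multiplies
every term of `S_{q,L,λ}(c)` by `e_L(c·t)`, so `S_{q,L,λ}(c) = e_L(c·t) S_{q,L,λ}(c)`. Hence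
`S_{q,L,λ}(c) ≠ 0` forces `L ∣ c·t` whenever `L ∣ ∇F(λ)·t`, and a Bézout argument with
`d = gcd(L, ∇F(λ))` shows that such `c` are the multiples of `∇F(λ)` modulo `L`.
-/

theorem exists_dvd_sub_mul_of_forall_dvd_dotProduct {R ι : Type*} [CommRing R] [IsDomain R]
    [IsPrincipalIdealRing R] [Fintype ι] [DecidableEq ι] {L : R} (hL : L ≠ 0) (g c : ι → R)
    (h : ∀ t, L ∣ g ⬝ᵥ t → L ∣ c ⬝ᵥ t) : ∃ b, ∀ i, L ∣ c i - b * g i := by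
  set I := Ideal.span (insert L (Set.range g))
  set d := Submodule.IsPrincipal.generator I
  have hd : ∀ x ∈ I, d ∣ x := fun x => (Submodule.IsPrincipal.mem_iff_generator_dvd I).mp
  obtain ⟨u, z, hz, hdz⟩ := Ideal.mem_span_insert.mp (Submodule.IsPrincipal.generator_mem I)
  obtain ⟨y, rfl⟩ := Ideal.mem_span_range_iff_exists_fun.mp hz
  -- `d = u L + g ⬝ᵥ y` is a gcd of `L` and the `g i`; `h` is tested on `e • y`, where `L = d e`,
  -- and on `Pi.single i 1 - s • y`, where `g i = d s`.
  have hgy : g ⬝ᵥ y = d - u * L := by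
    rw [show d = _ from hdz, dotProduct_comm]
    simp only [dotProduct]
    ring
  obtain ⟨e, he⟩ := hd L (Ideal.subset_span (Set.mem_insert L _))
  have he0 : e ≠ 0 := by rintro rfl; simp_all
  obtain ⟨k, hk⟩ : d ∣ c ⬝ᵥ y := by
    have : L ∣ c ⬝ᵥ (e • y) :=
      h _ ⟨1 - e * u, by rw [dotProduct_smul, hgy, smul_eq_mul, he]; ring⟩
    rw [dotProduct_smul, smul_eq_mul, he, mul_comm e] at this
    exact (mul_dvd_mul_iff_right he0).mp this
  refine ⟨k, fun i => ?_⟩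
  obtain ⟨s, hs⟩ := hd (g i) (Ideal.subset_span (Set.mem_insert_of_mem L ⟨i, rfl⟩))
  have key := h (Pi.single i 1 - s • y) ⟨s * u, by
    rw [dotProduct_sub, dotProduct_smul, dotProduct_single, hgy, hs, smul_eq_mul]; ring⟩
  rw [dotProduct_sub, dotProduct_smul, dotProduct_single, hk, smul_eq_mul] at key
  convert key using 1
  rw [hs]
  ring

theorem even_sum_sum_of_symm {ι : Type*} [Fintype ι] (f : ι → ι → ℤ)
    (hsymm : ∀ i j, f i j = f j i) (hdiag : ∀ i, Even (f i i)) : Even (∑ i, ∑ j, f i j) := by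
  rw [← ZMod.intCast_eq_zero_iff_even]
  push_cast
  rw [← Finset.sum_product']
  refine Finset.sum_involution (fun p _ => p.swap) (fun p _ => ?_) (fun p _ hp => ?_)
    (fun p _ => Finset.mem_univ _) (fun p _ => p.swap_swap)
  · rw [Prod.fst_swap, Prod.snd_swap, hsymm, ← two_mul]
    exact zero_mul _
  · rintro hswap
    obtain ⟨i, j⟩ := p
    obtain rfl : j = i := congrArg Prod.fst hswap
    exact hp ((ZMod.intCast_eq_zero_iff_even).mpr (hdiag j))

open scoped Fin.IntCast in
theorem sum_fin_comp_add_of_periodic {ι β : Type*} [Fintype ι] [DecidableEq ι] [AddCommMonoid β]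
    {M : ℕ} [NeZero M] (f : (ι → ℤ) → β) (hf : ∀ x u, f (x + (M : ℤ) • u) = f x) (w : ι → ℤ) :
    ∑ σ : ι → Fin M, f ((fun i => ((σ i : ℕ) : ℤ)) + w) =
      ∑ σ : ι → Fin M, f (fun i => ((σ i : ℕ) : ℤ)) := by
  refine Fintype.sum_equiv (Equiv.addRight fun i => (w i : Fin M)) _ _ fun σ => ?_
  have hmod : ∀ i, (M : ℤ) ∣ (((σ i + (w i : Fin M) : Fin M) : ℕ) : ℤ) - (σ i + w i) := by
    intro i
    refine Int.ModEq.dvd (Int.ModEq.symm ?_)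
    rw [Fin.val_add, Fin.val_intCast, Int.natCast_mod, Nat.cast_add,
      Int.toNat_of_nonneg (Int.emod_nonneg _ (by exact_mod_cast NeZero.ne M))]
    exact (Int.mod_modEq _ _).trans ((Int.mod_modEq _ _).add_left _)
  choose u hu using hmod
  have hσ : (fun i => (((σ + fun i => (w i : Fin M)) i : ℕ) : ℤ))
      = (fun i => ((σ i : ℕ) : ℤ)) + w + (M : ℤ) • u := by
    funext i
    simp only [Pi.add_apply, Pi.smul_apply, smul_eq_mul, ← hu i]
    ring
  rw [Equiv.coe_addRight, hσ, hf]

theorem eChar_add (q : ℕ) (s t : ℝ) : eChar q (s + t) = eChar q s * eChar q t := by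
  rw [eChar, eChar, eChar, ← Complex.exp_add]
  push_cast
  ring_nf

theorem eChar_mul_left {q : ℕ} (hq : q ≠ 0) (L : ℕ) (t : ℝ) :
    eChar (q * L) (q * t) = eChar L t := by
  rw [eChar, eChar]
  congr 1
  push_cast
  field_simp

theorem eChar_intCast (q : ℕ) [NeZero q] (s : ℤ) :
    eChar q s = ZMod.stdAddChar (s : ZMod q) := by
  rw [ZMod.stdAddChar_coe, eChar]
  push_cast
  rfl

theorem eChar_intCast_eq_one_iff (q : ℕ) [NeZero q] (s : ℤ) : eChar q s = 1 ↔ (q : ℤ) ∣ s := by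
  rw [eChar_intCast, ← AddChar.map_zero_eq_one (ZMod.stdAddChar (N := q)),
    ZMod.injective_stdAddChar.eq_iff, ZMod.intCast_zmod_eq_zero_iff_dvd]

theorem eChar_intCast_add_mul_self (q : ℕ) [NeZero q] (s k : ℤ) :
    eChar q ((s + q * k : ℤ) : ℝ) = eChar q s := by
  rw [eChar_intCast, eChar_intCast]
  push_cast
  rw [ZMod.natCast_self, zero_mul, add_zero]

section QuadraticForm

variable {m : ℕ} {N : Matrix (Fin m) (Fin m) ℤ}

theorem dotProduct_mulVec_comm_of_isSymm (hN : N.IsSymm) (x y : Fin m → ℤ) :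
    y ⬝ᵥ N *ᵥ x = x ⬝ᵥ N *ᵥ y := by
  rw [dotProduct_mulVec, dotProduct_comm, ← mulVec_transpose, hN.eq]

theorem two_mul_Fint (hN : N.IsSymm) (hdiag : ∀ i, Even (N i i)) (x : Fin m → ℤ) :
    2 * Fint N x = x ⬝ᵥ N *ᵥ x := by
  have hsum : ∑ i, ∑ j, N i j * x i * x j = x ⬝ᵥ N *ᵥ x := by
    simp only [dotProduct, mulVec, Finset.mul_sum]
    exact sum_congr rfl fun i _ => sum_congr rfl fun j _ => by ring
  have heven := even_sum_sum_of_symm (fun i j => N i j * x i * x j)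
    (fun i j => by rw [hN.apply i j]; ring) (fun i => ((hdiag i).mul_right _).mul_right _)
  rw [Fint, Int.mul_ediv_cancel' (even_iff_two_dvd.mp heven), hsum]

theorem Fint_add (hN : N.IsSymm) (hdiag : ∀ i, Even (N i i)) (x y : Fin m → ℤ) :
    Fint N (x + y) = Fint N x + x ⬝ᵥ N *ᵥ y + Fint N y := by
  have h := two_mul_Fint hN hdiag
  apply mul_left_cancel₀ (two_ne_zero : (2 : ℤ) ≠ 0)
  rw [mul_add, mul_add, h, h, h, mulVec_add, dotProduct_add, add_dotProduct, add_dotProduct,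
    dotProduct_mulVec_comm_of_isSymm hN x y]
  ring

theorem Fint_smul (hN : N.IsSymm) (hdiag : ∀ i, Even (N i i)) (k : ℤ) (x : Fin m → ℤ) :
    Fint N (k • x) = k ^ 2 * Fint N x := by
  have h := two_mul_Fint hN hdiag
  apply mul_left_cancel₀ (two_ne_zero : (2 : ℤ) ≠ 0)
  rw [h, mul_left_comm, h, mulVec_smul, dotProduct_smul, smul_dotProduct, smul_eq_mul,
    smul_eq_mul]
  ring

theorem Hpoly_add (L : ℕ) (lam x y : Fin m → ℤ) :
    Hpoly N L lam (x + y) = Hpoly N L lam x + grad N lam ⬝ᵥ y := by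
  change _ + grad N lam ⬝ᵥ (x + y) = _ + grad N lam ⬝ᵥ x + _
  rw [dotProduct_add, add_assoc]

end QuadraticForm

section Summand

variable {m : ℕ} (N : Matrix (Fin m) (Fin m) ℤ) (q L : ℕ) (lam c : Fin m → ℤ) (a : ℤ)

def sqSummand (x : Fin m → ℤ) : ℂ :=
  if (L : ℤ) ∣ Hpoly N L lam x then
    eChar (q * L) ((a * (Hpoly N L lam x + L * Fint N x) + c ⬝ᵥ x : ℤ) : ℝ)
  else 0

variable {N q L}

theorem sqSummand_add_smul (hN : N.IsSymm) (hdiag : ∀ i, Even (N i i)) (hq : q ≠ 0)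
    [NeZero L] (x t : Fin m → ℤ) (ht : (L : ℤ) ∣ grad N lam ⬝ᵥ t) :
    sqSummand N q L lam c a (x + (q : ℤ) • t) =
      eChar L (c ⬝ᵥ t : ℤ) * sqSummand N q L lam c a x := by
  obtain ⟨k, hk⟩ := ht
  have hH : Hpoly N L lam (x + (q : ℤ) • t) = Hpoly N L lam x + L * (q * k) := by
    rw [Hpoly_add, dotProduct_smul, hk, smul_eq_mul]
    ring
  have hE : a * (Hpoly N L lam (x + (q : ℤ) • t) + L * Fint N (x + (q : ℤ) • t))
        + c ⬝ᵥ (x + (q : ℤ) • t)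
      = a * (Hpoly N L lam x + L * Fint N x) + c ⬝ᵥ x
        + q * (c ⬝ᵥ t + L * (a * (k + x ⬝ᵥ N *ᵥ t + q * Fint N t))) := by
    rw [hH, Fint_add hN hdiag, Fint_smul hN hdiag, mulVec_smul, dotProduct_smul, dotProduct_add,
      dotProduct_smul, smul_eq_mul, smul_eq_mul]
    ring
  unfold sqSummand
  rw [hE, hH]
  simp only [dvd_add_left (dvd_mul_right _ _)]
  split_ifs
  · rw [Int.cast_add, eChar_add, Int.cast_mul, Int.cast_natCast, eChar_mul_left hq,
      eChar_intCast_add_mul_self, mul_comm]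
  · rw [mul_zero]

theorem sqSummand_add_mul_smul (hN : N.IsSymm) (hdiag : ∀ i, Even (N i i)) (hq : q ≠ 0)
    [NeZero L] (x u : Fin m → ℤ) :
    sqSummand N q L lam c a (x + ((q * L : ℕ) : ℤ) • u) = sqSummand N q L lam c a x := by
  have hu : ((q * L : ℕ) : ℤ) • u = (q : ℤ) • (L : ℤ) • u := by
    rw [smul_smul]
    push_cast
    rfl
  have hLu : ∀ v : Fin m → ℤ, (L : ℤ) ∣ v ⬝ᵥ (L : ℤ) • u := fun v => by
    rw [dotProduct_smul]
    exact dvd_mul_right _ _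
  rw [hu, sqSummand_add_smul lam c a hN hdiag hq x _ (hLu _),
    (eChar_intCast_eq_one_iff L _).mpr (hLu c), one_mul]

end Summand

theorem Sq_eq_sum_sqSummand (n : ℕ) (N : Matrix (Fin (n + 1)) (Fin (n + 1)) ℤ) (q L : ℕ)
    (lam c : Fin (n + 1) → ℤ) :
    Sq n N q L lam c = ∑ a ∈ (range q).filter (fun a => Nat.gcd a q = 1),
      ∑ σ : Fin (n + 1) → Fin (q * L), sqSummand N q L lam c a (fun i => ((σ i : ℕ) : ℤ)) := by
  simp only [Sq, sqSummand, sum_filter]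
  rfl

theorem Sq_support_general (n : ℕ)
    (N : Matrix (Fin (n+1)) (Fin (n+1)) ℤ) (hNsym : N.IsSymm)
    (hNeven : ∀ i, Even (N i i))
    (L : ℕ) (hL : 0 < L)
    (lam : Fin (n+1) → ℤ) :
    ∀ q : ℕ, 0 < q → ∀ c : Fin (n+1) → ℤ,
      Sq n N q L lam c ≠ 0 →
      ∃ b : ℤ, ∀ i, (L : ℤ) ∣ (c i - b * grad N lam i) := by
  intro q hq c hS
  have : NeZero L := ⟨hL.ne'⟩
  have : NeZero (q * L) := ⟨(Nat.mul_pos hq hL).ne'⟩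
  refine exists_dvd_sub_mul_of_forall_dvd_dotProduct (by exact_mod_cast hL.ne') _ c
    fun t ht => ?_
  have hfix : eChar L (c ⬝ᵥ t : ℤ) * Sq n N q L lam c = Sq n N q L lam c := by
    rw [Sq_eq_sum_sqSummand, mul_sum]
    refine sum_congr rfl fun a _ => ?_
    rw [mul_sum, ← sum_fin_comp_add_of_periodic _
      (sqSummand_add_mul_smul lam c a hNsym hNeven hq.ne') ((q : ℤ) • t)]
    exact sum_congr rfl fun σ _ => (sqSummand_add_smul lam c a hNsym hNeven hq.ne' _ t ht).symm
  exact (eChar_intCast_eq_one_iff L _).mp ((mul_eq_right₀ hS).mp hfix)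

/-- Proposition 5.2 (lattice support condition): `S_{q,L,λ}(c) ≠ 0` forces
`c ≡ b·∇F(λ) mod L` for some integer `b`. -/
theorem Sq_support (n : ℕ) (hn : 2 ≤ n)
    (N : Matrix (Fin (n+1)) (Fin (n+1)) ℤ) (hNsym : N.IsSymm)
    (hNeven : ∀ i, Even (N i i)) (hNdet : N.det ≠ 0)
    (L : ℕ) (hL : 0 < L)
    (lam : Fin (n+1) → ℤ) (hlam : (L : ℤ) ∣ Fint N lam) :
    ∀ q : ℕ, 0 < q → ∀ c : Fin (n+1) → ℤ,
      Sq n N q L lam c ≠ 0 →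
      ∃ b : ℤ, ∀ i, (L : ℤ) ∣ (c i - b * grad N lam i) :=
  Sq_support_general n N hNsym hNeven L hL lam

end Quad
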